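/- Every infinite binary word u whose subword complexity satisfies p_u(n) ≤ 2n for all n ≥ 1 contains a nonempty factor of exponent ≥ 5/2; equivalently, the critical exponent of every infinite binary word with subword complexity bounded above by 2n is at least 5/2. -/

import Mathlib

/-- The factor of the infinite word `u` of length `m` starting at position `i`. -/
def factorAt {k : ℕ} (u : ℕ → Fin k) (i m : ℕ) : List (Fin k) :=
  (List.range m).map fun j => u (i + j)

/-- `v` is a factor of the infinite word `u`. -/
def IsFactor {k : ℕ} (v : List (Fin k)) (u : ℕ → Fin k) : Prop :=
  ∃ i, v = factorAt u i v.length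

/-- Subword complexity: the number of distinct factors of length `n`. -/
noncomputable def complexity {k : ℕ} (u : ℕ → Fin k) (n : ℕ) : ℕ :=
  Set.ncard {v : List (Fin k) | v.length = n ∧ IsFactor v u}

/-- The word `w` has period `q` (`1 ≤ q ≤ |w|`, and `w(i) = w(i+q)` whenever defined). -/
def HasPer {A : Type*} (w : List A) (q : ℕ) : Prop :=
  1 ≤ q ∧ q ≤ w.length ∧ ∀ i, i + q < w.length → w[i]? = w[i + q]?

/-- The minimal period of a finite word. -/
noncomputable def minPer {A : Type*} (w : List A) : ℕ := sInf {q | HasPer w q}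

/-- The exponent of a finite word: its length divided by its minimal period. -/
noncomputable def exponent {A : Type*} (w : List A) : ℝ := (w.length : ℝ) / (minPer w : ℝ)

/-- `u` is `α`-power-free: no nonempty factor has exponent `≥ α`. -/
def PowerFree {k : ℕ} (α : ℝ) (u : ℕ → Fin k) : Prop :=
  ∀ v : List (Fin k), v ≠ [] → IsFactor v u → exponent v < α

/-- `u` is `α⁺`-power-free: no nonempty factor has exponent `> α`. -/
def PowerFreePlus {k : ℕ} (α : ℝ) (u : ℕ → Fin k) : Prop :=
  ∀ v : List (Fin k), v ≠ [] → IsFactor v u → exponent v ≤ α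

/-- Overlap-free means `2⁺`-power-free. -/
def OverlapFree {k : ℕ} (u : ℕ → Fin k) : Prop := PowerFreePlus 2 u

/-- The Thue–Morse word: `t n` is the number of 1's, mod 2, in the binary expansion of `n`. -/
def thueMorse : ℕ → Fin 2 := fun n => Fin.ofNat 2 ((Nat.digits 2 n).count 1)

/-!
A backtracking search over binary words, pruned as soon as a word contains a factor of exponent
`≥ 5/2` or nine distinct factors of length 4, terminates: every word of length 39 is pruned. A
prefix of `u` has at most `p_u(4) ≤ 8` distinct factors of length 4, so some prefix of `u`
contains a factor of exponent `≥ 5/2`.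
-/

theorem div_le_exponent_of_hasPer {α : Type*} {w : List α} {q : ℕ} (h : HasPer w q) :
    (w.length : ℝ) / q ≤ exponent w := by
  have hmin : HasPer w (minPer w) := Nat.sInf_mem (s := {q | HasPer w q}) ⟨q, h⟩
  have hle : (minPer w : ℝ) ≤ q := by exact_mod_cast Nat.sInf_le h
  have hpos : (0 : ℝ) < minPer w := by exact_mod_cast hmin.1
  exact div_le_div_of_nonneg_left (Nat.cast_nonneg _) hpos hle

section Factors

variable {k : ℕ}

@[simp]
theorem length_factorAt (u : ℕ → Fin k) (i m : ℕ) : (factorAt u i m).length = m := by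
  simp [factorAt]

theorem getElem?_factorAt (u : ℕ → Fin k) {i m j : ℕ} (h : j < m) :
    (factorAt u i m)[j]? = some (u (i + j)) := by
  simp [factorAt, h]

theorem isFactor_factorAt (u : ℕ → Fin k) (i m : ℕ) : IsFactor (factorAt u i m) u :=
  ⟨i, by rw [length_factorAt]⟩

theorem hasPer_factorAt_of_eq {u : ℕ → Fin k} {i q r : ℕ} (hq : 0 < q)
    (h : factorAt u (i + q) r = factorAt u i r) : HasPer (factorAt u i (q + r)) q := by
  refine ⟨hq, by simp, fun j hj => ?_⟩
  rw [length_factorAt] at hj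
  have := congrArg (·[j]?) h
  simp only [getElem?_factorAt u (show j < r by omega)] at this
  rw [getElem?_factorAt u (by omega), getElem?_factorAt u hj, ← Nat.add_assoc, Nat.add_right_comm,
    this]

theorem finite_setOf_isFactor_length_eq (u : ℕ → Fin k) (n : ℕ) :
    {v : List (Fin k) | v.length = n ∧ IsFactor v u}.Finite :=
  (List.finite_length_eq (Fin k) n).subset fun _ hv => hv.1

end Factors

/-- Prefixes are stored backwards, so that the search below extends words by `cons`. -/
def prefixRev {α : Type*} (u : ℕ → α) : ℕ → List α
  | 0 => []
  | n + 1 => u n :: prefixRev u n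

section PrefixRev

variable {α : Type*}

@[simp]
theorem length_prefixRev (u : ℕ → α) (n : ℕ) : (prefixRev u n).length = n := by
  induction n with
  | zero => rfl
  | succ n ih => simp [prefixRev, ih]

theorem getElem?_prefixRev (u : ℕ → α) {n j : ℕ} (h : j < n) :
    (prefixRev u n)[j]? = some (u (n - 1 - j)) := by
  induction n generalizing j with
  | zero => omega
  | succ n ih =>
    cases j with
    | zero => simp [prefixRev]
    | succ j => simp [prefixRev, ih (show j < n by omega), Nat.sub_sub, Nat.add_comm]

theorem take_drop_prefixRev {k : ℕ} (u : ℕ → Fin k) {n i m : ℕ} (h : i + m ≤ n) :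
    ((prefixRev u n).drop i).take m = (factorAt u (n - i - m) m).reverse := by
  refine List.ext_getElem? fun j => ?_
  by_cases hj : j < m
  · rw [List.getElem?_take, if_pos hj, List.getElem?_drop, getElem?_prefixRev u (by omega),
      List.getElem?_reverse (by simpa using hj), length_factorAt,
      getElem?_factorAt u (by omega)]
    congr 2
    omega
  · rw [List.getElem?_take, if_neg hj, List.getElem?_eq_none (by simp; omega)]

end PrefixRev

/-- A prefix of period `q` and length `q + ⌈3q/2⌉` is the shortest one of exponent `≥ 5/2`. -/
def hasFiveHalvesPowerPrefix {α : Type*} [DecidableEq α] (w : List α) : Bool :=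
  (List.range (w.length + 1)).any fun q =>
    0 < q && q + (3 * q + 1) / 2 ≤ w.length &&
      w.take ((3 * q + 1) / 2) == (w.drop q).take ((3 * q + 1) / 2)

theorem exists_factor_of_hasFiveHalvesPowerPrefix {k : ℕ} {u : ℕ → Fin k} {n : ℕ}
    (h : hasFiveHalvesPowerPrefix (prefixRev u n)) :
    ∃ v : List (Fin k), v ≠ [] ∧ IsFactor v u ∧ (5 / 2 : ℝ) ≤ exponent v := by
  simp only [hasFiveHalvesPowerPrefix, List.any_eq_true, Bool.and_eq_true, decide_eq_true_eq,
    beq_iff_eq, length_prefixRev] at h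
  obtain ⟨q, -, ⟨hq, hlen⟩, heq⟩ := h
  set r := (3 * q + 1) / 2
  have hfront := take_drop_prefixRev u (i := 0) (m := r) (n := n) (by omega)
  rw [List.drop_zero] at hfront
  rw [hfront, take_drop_prefixRev u hlen, List.reverse_inj] at heq
  have hper : HasPer (factorAt u (n - q - r) (q + r)) q :=
    hasPer_factorAt_of_eq hq (by rw [← heq]; congr 1; omega)
  have hqr : (5 / 2 : ℝ) ≤ ((q + r : ℕ) : ℝ) / q := by
    have hr : (3 * q : ℝ) ≤ 2 * r := by exact_mod_cast (show 3 * q ≤ 2 * r by omega)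
    rw [le_div_iff₀ (by exact_mod_cast hq)]
    push_cast
    linarith
  refine ⟨factorAt u (n - q - r) (q + r), List.ne_nil_of_length_pos (by simp; omega),
    isFactor_factorAt u _ _, hqr.trans ?_⟩
  simpa using div_le_exponent_of_hasPer hper

section DistinctFactors

variable {α : Type*} [DecidableEq α]

/-- Defined by recursion on `w`, rather than by deduplicating all factors, so that the kernel
shares this computation between a word and its extensions. -/
def distinctFactors (n : ℕ) : List α → List (List α)
  | [] => []
  | a :: w =>
    if n ≤ (a :: w).length ∧ (a :: w).take n ∉ distinctFactors n w then
      (a :: w).take n :: distinctFactors n w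
    else distinctFactors n w

theorem nodup_distinctFactors (n : ℕ) (w : List α) : (distinctFactors n w).Nodup := by
  induction w with
  | nil => exact List.nodup_nil
  | cons a w ih =>
    rw [distinctFactors]
    split_ifs with h
    · exact List.nodup_cons.mpr ⟨h.2, ih⟩
    · exact ih

theorem mem_distinctFactors {n : ℕ} {w x : List α} (hx : x ∈ distinctFactors n w) :
    ∃ i, i + n ≤ w.length ∧ x = (w.drop i).take n := by
  induction w with
  | nil => simp [distinctFactors] at hx
  | cons a w ih =>
    rw [distinctFactors] at hx
    have shift : x ∈ distinctFactors n w → ∃ i, i + n ≤ (a :: w).length ∧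
        x = ((a :: w).drop i).take n := fun hx => by
      obtain ⟨i, hi, rfl⟩ := ih hx
      exact ⟨i + 1, by simp; omega, rfl⟩
    split_ifs at hx with h
    · rcases List.mem_cons.mp hx with rfl | hx
      · exact ⟨0, by simpa using h.1, rfl⟩
      · exact shift hx
    · exact shift hx

theorem length_distinctFactors_prefixRev_le {k : ℕ} (u : ℕ → Fin k) (n L : ℕ) :
    (distinctFactors n (prefixRev u L)).length ≤ complexity u n := by
  set T := ((distinctFactors n (prefixRev u L)).map List.reverse).toFinset
  have hT : T.card = (distinctFactors n (prefixRev u L)).length := by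
    rw [List.toFinset_card_of_nodup ((nodup_distinctFactors _ _).map List.reverse_injective),
      List.length_map]
  have hsub : (T : Set (List (Fin k))) ⊆ {v | v.length = n ∧ IsFactor v u} := by
    intro v hv
    obtain ⟨x, hx, rfl⟩ := List.mem_map.mp (List.mem_toFinset.mp hv)
    obtain ⟨i, hi, rfl⟩ := mem_distinctFactors hx
    rw [length_prefixRev] at hi
    rw [take_drop_prefixRev u hi, List.reverse_reverse]
    exact ⟨length_factorAt u _ _, isFactor_factorAt u _ _⟩
  rw [← hT, ← Set.ncard_coe_finset]
  exact Set.ncard_le_ncard hsub (finite_setOf_isFactor_length_eq u n)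

end DistinctFactors

/-- `barredWithin p f w` certifies that, however `w` is extended on the left one letter at a time,
`p` holds after at most `f` letters. -/
def barredWithin {k : ℕ} (p : List (Fin k) → Bool) : ℕ → List (Fin k) → Bool
  | 0, w => p w
  | f + 1, w => p w || (List.finRange k).all fun a => barredWithin p f (a :: w)

theorem exists_prefixRev_of_barredWithin {k : ℕ} {p : List (Fin k) → Bool} (u : ℕ → Fin k)
    {f L : ℕ} (h : barredWithin p f (prefixRev u L)) : ∃ n, p (prefixRev u n) := by
  induction f generalizing L with
  | zero => exact ⟨L, h⟩
  | succ f ih =>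
    rw [barredWithin, Bool.or_eq_true, List.all_eq_true] at h
    rcases h with h | h
    · exact ⟨L, h⟩
    · exact ih (L := L + 1) (h (u L) (List.mem_finRange _))

theorem barredWithin_fiveHalvesPower_or_nine_factors :
    barredWithin
      (fun w : List (Fin 2) => hasFiveHalvesPowerPrefix w || 8 < (distinctFactors 4 w).length)
      39 [] := by
  decide +kernel

/-- Every infinite binary word of subword complexity at most `2n` contains a
nonempty factor of exponent at least 5/2. -/
theorem low_complexity_has_52_power (u : ℕ → Fin 2)
    (h : ∀ n, 1 ≤ n → complexity u n ≤ 2 * n) :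
    ∃ v : List (Fin 2), v ≠ [] ∧ IsFactor v u ∧ (5 / 2 : ℝ) ≤ exponent v := by
  obtain ⟨n, hn⟩ := exists_prefixRev_of_barredWithin u (L := 0)
    barredWithin_fiveHalvesPower_or_nine_factors
  rw [Bool.or_eq_true, decide_eq_true_eq] at hn
  rcases hn with hpow | hcount
  · exact exists_factor_of_hasFiveHalvesPowerPrefix hpow
  · have := length_distinctFactors_prefixRev_le u 4 n
    have := h 4 (by norm_num)
    omega
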